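/- arXiv:0910.5076 — 2 statements merged into one kernel-verified Lean document; each statement's English description precedes it below -/
import Mathlib

section
/- Conditional sub-additivity of monotone complexity: there is a constant c such that for all x, y ∈ S∪Ω, Km²(x,y) ≤ Km(x|y) + Km(y) + c. -/
open MeasureTheory Filter Set
open scoped ENNReal NNReal

namespace AlgRand

/-- `S` : finite binary strings. -/
abbrev S : Type := List Bool

/-- `Seq` : infinite binary sequences (the space Ω). -/
abbrev Seq : Type := ℕ → Bool

/-- A finite string is a prefix of an infinite sequence. -/
def PrefixSeq (x : S) (ω : Seq) : Prop := ∀ i : Fin x.length, x.get i = ω i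

/-- The first `n` bits of an infinite sequence. -/
def seqTake (ω : Seq) (n : ℕ) : S := List.ofFn fun i : Fin n => ω i

/-- Cylinder set Δ(x) ⊆ Ω. -/
def cyl (x : S) : Set Seq := {ω | PrefixSeq x ω}

/-- Product cylinder Δ(x,y) ⊆ Ω². -/
def cyl2 (xy : S × S) : Set (Seq × Seq) := cyl xy.1 ×ˢ cyl xy.2

/-- Prefix (partial order) on S². -/
def Pre2 (a b : S × S) : Prop := a.1 <+: b.1 ∧ a.2 <+: b.2

/-- A pair of strings is a (strict) prefix of a pair of sequences. -/
def Pre2Seq (a : S × S) (ω : Seq × Seq) : Prop := PrefixSeq a.1 ω.1 ∧ PrefixSeq a.2 ω.2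

/-- Recursively enumerable subset of a primcodable type. -/
def RESet {β : Type} [Primcodable β] (A : Set β) : Prop :=
  ∃ f : ℕ → Option β, Computable f ∧ A = {a | ∃ n, f n = some a}

/-- A computable probability measure on Ω. -/
def ComputableProb (P : Measure Seq) : Prop :=
  IsProbabilityMeasure P ∧
    ∃ p : S × ℕ → ℚ, Computable p ∧
      ∀ (x : S) (k : ℕ), 0 < k → |(P (cyl x)).toReal - (p (x, k) : ℝ)| < 1 / k

/-- A computable probability measure on Ω². -/
def ComputableProb2 (P : Measure (Seq × Seq)) : Prop :=
  IsProbabilityMeasure P ∧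
    ∃ p : (S × S) × ℕ → ℚ, Computable p ∧
      ∀ (xy : S × S) (k : ℕ), 0 < k → |(P (cyl2 xy)).toReal - (p (xy, k) : ℝ)| < 1 / k

/-- Ũ_n, the open set covered by the n-th level of a test. -/
def testUnion {α β : Type} (C : β → Set α) (U : Set (ℕ × β)) (n : ℕ) : Set α :=
  ⋃ x ∈ {x | (n, x) ∈ U}, C x

/-- Martin-Löf test w.r.t. a measure, generic in the cylinder function `C`. -/
def IsMLTest {α β : Type} [MeasurableSpace α] [Primcodable β]
    (C : β → Set α) (P : Measure α) (U : Set (ℕ × β)) : Prop :=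
  RESet U ∧ (∀ n, testUnion C U (n + 1) ⊆ testUnion C U n) ∧
    ∀ n, P (testUnion C U n) < (2⁻¹ : ℝ≥0∞) ^ n

/-- Martin-Löf randomness: ω avoids the limit of every test. -/
def MLRandom {α β : Type} [MeasurableSpace α] [Primcodable β]
    (C : β → Set α) (P : Measure α) (ω : α) : Prop :=
  ∀ U, IsMLTest C P U → ω ∉ ⋂ n, testUnion C U n

/-- ω ∈ R^P, for P on Ω. -/
abbrev Random1 (P : Measure Seq) (ω : Seq) : Prop := MLRandom cyl P ω

/-- ω ∈ R^P, for P on Ω². -/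
abbrev Random2 (P : Measure (Seq × Seq)) (ω : Seq × Seq) : Prop := MLRandom cyl2 P ω

/-- Marginal distribution P_X on the first coordinate. -/
noncomputable def margX (P : Measure (Seq × Seq)) : Measure Seq := P.map Prod.fst

/-- Marginal distribution P_Y on the second coordinate. -/
noncomputable def margY (P : Measure (Seq × Seq)) : Measure Seq := P.map Prod.snd

/-- Conditional probability P(x|y) = P(x,y)/P_Y(y), with value 0 when P_Y(y) = 0. -/
noncomputable def condP (P : Measure (Seq × Seq)) (x y : S) : ℝ :=
  (P (cyl2 (x, y))).toReal / (P (Set.univ ×ˢ cyl y)).toReal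

/-- P(x|yinf) := lim_{y → yinf} P(x|y) along prefixes of yinf (junk value if no limit). -/
noncomputable def condPLim (P : Measure (Seq × Seq)) (x : S) (yinf : Seq) : ℝ :=
  limUnder atTop fun m => condP P x (seqTake yinf m)

/-- Conditional probability P(y|x) = P(x,y)/P_X(x), with value 0 when P_X(x) = 0. -/
noncomputable def condX (P : Measure (Seq × Seq)) (y x : S) : ℝ :=
  (P (cyl2 (x, y))).toReal / (P (cyl x ×ˢ Set.univ)).toReal

/-- P(y|xinf) := lim_{x → xinf} P(y|x) along prefixes of xinf (junk value if no limit). -/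
noncomputable def condXLim (P : Measure (Seq × Seq)) (y : S) (xinf : Seq) : ℝ :=
  limUnder atTop fun m => condX P y (seqTake xinf m)

/-- The set S ∪ Ω of finite or infinite binary sequences. -/
inductive SW : Type where
  | fin : S → SW
  | inf : Seq → SW

/-- Prefix order ⊑ on S ∪ Ω. -/
def SW.le : SW → SW → Prop
  | .fin x, .fin y => x <+: y
  | .fin x, .inf ω => PrefixSeq x ω
  | .inf ω, .inf ω' => ω = ω'
  | .inf _, .fin _ => False

/-- (S ∪ Ω)². -/
abbrev SW2 : Type := SW × SW

/-- Componentwise prefix order ⊑ on (S ∪ Ω)². -/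
def SW2.le (a b : SW2) : Prop := SW.le a.1 b.1 ∧ SW.le a.2 b.2

/-- Length |x| ∈ ℕ∞ of an element of S ∪ Ω. -/
def SW.len : SW → ℕ∞
  | .fin x => (x.length : ℕ∞)
  | .inf _ => ⊤

/-- |p| = |p₁| + |p₂| for p ∈ (S ∪ Ω)². -/
def SW2.len (a : SW2) : ℕ∞ := SW.len a.1 + SW.len a.2

/-- Δ(x) for x ∈ S ∪ Ω. -/
def SW.cylW : SW → Set Seq
  | .fin x => cyl x
  | .inf ω => {ω}

/-- Δ(x,y) for (x,y) ∈ (S ∪ Ω)². -/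
def SW2.cylW (a : SW2) : Set (Seq × Seq) := SW.cylW a.1 ×ˢ SW.cylW a.2

/-- Embedding S → S ∪ Ω. -/
def emb1 (x : S) : SW := SW.fin x

/-- Embedding S² → (S ∪ Ω)². -/
def emb2 (p : S × S) : SW2 := (SW.fin p.1, SW.fin p.2)

/-- Embedding Ω² → (S ∪ Ω)². -/
def inf2 (ω : Seq × Seq) : SW2 := (SW.inf ω.1, SW.inf ω.2)

/-- Least upper bound with respect to a relation. -/
def IsSupRel {V : Type} (le : V → V → Prop) (A : Set V) (s : V) : Prop :=
  (∀ a ∈ A, le a s) ∧ ∀ b, (∀ a ∈ A, le a b) → le s b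

/-- `f` is a computable monotone function defined by an r.e. set `F` satisfying
condition (3) of the paper:  (λ,λ) ∈ F_p and ⋁_{p'⊑p} F_{p'} exists for every p,
and f(q) = ⋁ {x : ∃ p' ⊑ q, (p',x) ∈ F}. -/
def CompMono {D E : Type} {W V : Type} [Primcodable D] [Primcodable E]
    (embD : D → W) (leW : W → W → Prop) (embE : E → V) (leV : V → V → Prop)
    (eps : E) (f : W → V) : Prop :=
  ∃ F : Set (D × E), RESet F ∧
    (∀ p : D, (p, eps) ∈ F ∧
        ∃ s, IsSupRel leV (embE '' {x | ∃ p' : D, leW (embD p') (embD p) ∧ (p', x) ∈ F}) s) ∧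
    ∀ q : W, IsSupRel leV (embE '' {x | ∃ p' : D, leW (embD p') q ∧ (p', x) ∈ F}) (f q)

/-- Computable monotone function (S ∪ Ω)² → (S ∪ Ω)². -/
def CompMono22 (f : SW2 → SW2) : Prop := CompMono emb2 SW2.le emb2 SW2.le (([], []) : S × S) f

/-- Computable monotone function S ∪ Ω → (S ∪ Ω)². -/
def CompMono12 (g : SW → SW2) : Prop := CompMono emb1 SW.le emb2 SW2.le (([], []) : S × S) g

/-- Computable monotone function (S ∪ Ω)² → S ∪ Ω. -/
def CompMono21 (e : SW2 → SW) : Prop := CompMono emb2 SW2.le emb1 SW.le ([] : S) e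

/-- Computable monotone function S ∪ Ω → S ∪ Ω. -/
def CompMono11 (ρ : SW → SW) : Prop := CompMono emb1 SW.le emb1 SW.le ([] : S) ρ

/-- Km²_f(x) := min{|p₁|+|p₂| : x ⊑ f(p₁,p₂)} ∈ ℕ∞. -/
noncomputable def Km2 (f : SW2 → SW2) (x : SW2) : ℕ∞ :=
  ⨅ (p : SW2) (_ : SW2.le x (f p)), SW2.len p

/-- Km_f(x) := min{|p| : x ⊑ f(p,λ)} ∈ ℕ∞. -/
noncomputable def Km1 (f : SW2 → SW2) (x : SW2) : ℕ∞ :=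
  ⨅ (p : SW) (_ : SW2.le x (f (p, SW.fin []))), SW.len p

/-- Km(x|y) := min{|p| : (x,λ) ⊑ u(p,y)} ∈ ℕ∞. -/
noncomputable def KmCond (u : SW2 → SW2) (x y : SW) : ℕ∞ :=
  ⨅ (p : SW) (_ : SW2.le (x, SW.fin []) (u (p, y))), SW.len p

/-- Km_g(x) := min{|p| : x ⊑ g(p)} for g : S ∪ Ω → (S ∪ Ω)². -/
noncomputable def KmOf12 (g : SW → SW2) (x : SW2) : ℕ∞ :=
  ⨅ (p : SW) (_ : SW2.le x (g p)), SW.len p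

/-- Optimality of a computable monotone function on (S ∪ Ω)². -/
def Optimal (u : SW2 → SW2) : Prop :=
  CompMono22 u ∧
    ∀ f : SW2 → SW2, CompMono22 f → ∃ c : ℕ, ∀ x : SW2, Km2 u x ≤ Km2 f x + (c : ℕ∞)

/-- 2^{-n} for n ∈ ℕ∞ (with 2^{-∞} = 0), as an extended nonnegative real. -/
noncomputable def tpow (n : ℕ∞) : ℝ≥0∞ := if n = ⊤ then 0 else (2⁻¹ : ℝ≥0∞) ^ n.toNat

/-- Non-overlapping subset of (S ∪ Ω)². -/
def NonOverlapW (A : Set SW2) : Prop := A.Pairwise fun a b => SW2.cylW a ∩ SW2.cylW b = ∅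

/-- Non-overlapping subset of S². -/
def NonOverlapF (A : Set (S × S)) : Prop := A.Pairwise fun a b => cyl2 a ∩ cyl2 b = ∅

/-- Condition (4): any two members of A are comparable or have disjoint cylinders. -/
def Cond4 (A : Set (S × S)) : Prop :=
  ∀ a ∈ A, ∀ b ∈ A, Pre2 a b ∨ Pre2 b a ∨ cyl2 a ∩ cyl2 b = ∅

/-- Condition (5): relative complements of cylinders are non-overlapping unions within A. -/
def Cond5 (A : Set (S × S)) : Prop :=
  ∀ a ∈ A, ∀ b ∈ A, ∃ α ⊆ A, NonOverlapF α ∧ cyl2 a ∩ (cyl2 b)ᶜ = ⋃ z ∈ α, cyl2 z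

/-- A(xinf) := {x ∈ A | x ⊏ xinf}. -/
def Asec (A : Set (S × S)) (ω : Seq × Seq) : Set (S × S) := {a ∈ A | Pre2Seq a ω}

/-- sup_{x ∈ A} (−log P(x) − K(x)) < ∞. -/
def KmBound (P : Measure (Seq × Seq)) (K : S × S → ℕ∞) (A : Set (S × S)) : Prop :=
  ∃ c : ℝ, ∀ x ∈ A, ∀ k : ℕ, K x = (k : ℕ∞) →
    0 < P (cyl2 x) ∧ -Real.logb 2 ((P (cyl2 x)).toReal) ≤ (k : ℝ) + c

/-- sup_{x ∈ A} |log P(x) + K(x)| < ∞. -/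
def KmBoundAbs (P : Measure (Seq × Seq)) (K : S × S → ℕ∞) (A : Set (S × S)) : Prop :=
  ∃ c : ℝ, ∀ x ∈ A, ∃ k : ℕ, K x = (k : ℕ∞) ∧ 0 < P (cyl2 x) ∧
    |Real.logb 2 ((P (cyl2 x)).toReal) + (k : ℝ)| ≤ c

/-- The conditional probability P(·|yinf) is computable relative to the oracle yinf:
there is a partial computable A(x,y,k), monotone in y, approximating P(x|yinf)
to within 1/k along prefixes y of yinf. -/
def CondComputableAt (P : Measure (Seq × Seq)) (yinf : Seq) : Prop :=
  ∃ A : (S × S) × ℕ →. ℚ, Partrec A ∧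
    (∀ (x y z : S) (k : ℕ) (q : ℚ), q ∈ A ((x, y), k) → y <+: z → q ∈ A ((x, z), k)) ∧
    ∀ (x : S) (k : ℕ), 0 < k → ∃ (m : ℕ) (q : ℚ), q ∈ A ((x, seqTake yinf m), k) ∧
      |condPLim P x yinf - (q : ℝ)| < 1 / k

/-- A Martin-Löf test w.r.t. Q which is r.e. relative to the oracle yinf. -/
def RelMLTest (Q : Measure Seq) (yinf : Seq) (U : ℕ → Set S) : Prop :=
  (∃ B : (ℕ × ℕ) × S →. S, Partrec B ∧
      (∀ (i n : ℕ) (y z x : S), x ∈ B ((i, n), y) → y <+: z → x ∈ B ((i, n), z)) ∧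
      ∀ n, U n = {x | ∃ i m, x ∈ B ((i, n), seqTake yinf m)}) ∧
  (∀ n, (⋃ x ∈ U (n + 1), cyl x) ⊆ ⋃ x ∈ U n, cyl x) ∧
  ∀ n, Q (⋃ x ∈ U n, cyl x) < (2⁻¹ : ℝ≥0∞) ^ n

/-- Martin-Löf randomness w.r.t. Q relative to the oracle yinf. -/
def RelMLRandom (Q : Measure Seq) (yinf xinf : Seq) : Prop :=
  ∀ U, RelMLTest Q yinf U → xinf ∉ ⋂ n, ⋃ x ∈ U n, cyl x

/-- Likelihood ratio r(x) = Q(x)/P(x), with value 0 when P(x) = 0. -/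
noncomputable def ratio (P Q : Measure Seq) (x : S) : ℝ :=
  (Q (cyl x)).toReal / (P (cyl x)).toReal

/-- P(·|yinf) f,(xinf,yinf)-effectively converges with rate g. -/
def EffConv (P : Measure (Seq × Seq)) (xinf yinf : Seq) (f : ℕ → ℚ) (g : ℕ → ℕ) : Prop :=
  Computable g ∧ Monotone g ∧
    ∀ x y : S, PrefixSeq x xinf → PrefixSeq y yinf → g x.length ≤ y.length →
      |condP P x y / condPLim P x yinf - 1| < (f x.length : ℝ)

/-- A_g(xinf,yinf) := {(x,y) : |y| = g(|x|), (x,y) ⊏ (xinf,yinf)}. -/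
def AgSec (g : ℕ → ℕ) (xinf yinf : Seq) : Set (S × S) :=
  {xy | xy.2.length = g xy.1.length ∧ PrefixSeq xy.1 xinf ∧ PrefixSeq xy.2 yinf}

/-- A uniformly computable family of probability measures on Ω. -/
def UnifComputableFam (Pn : ℕ → Measure Seq) : Prop :=
  (∀ n, IsProbabilityMeasure (Pn n)) ∧
    ∃ A : (ℕ × S) × ℕ → ℚ, Computable A ∧
      ∀ (n : ℕ) (x : S) (k : ℕ), 0 < k →
        |(A ((n, x), k) : ℝ) - ((Pn n) (cyl x)).toReal| < 1 / k

/-- A computable sequence of reals (e.g. a computable probability on ℕ). -/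
def ComputableRealSeq (α : ℕ → ℝ) : Prop :=
  ∃ a : ℕ × ℕ → ℚ, Computable a ∧ ∀ (n k : ℕ), 0 < k → |α n - (a (n, k) : ℝ)| < 1 / k

/-- The mixture Σ_n α(n) P_n. -/
noncomputable def mixture (α : ℕ → ℝ) (Pn : ℕ → Measure Seq) : Measure Seq :=
  Measure.sum fun n => ENNReal.ofReal (α n) • Pn n

/-- The conditional probability measure P(·|y) on Ω, for a finite string y. -/
noncomputable def condMeasGivenY (P : Measure (Seq × Seq)) (y : S) : Measure Seq :=
  (P (Set.univ ×ˢ cyl y))⁻¹ • ((P.restrict (Set.univ ×ˢ cyl y)).map Prod.fst)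

/-- The posterior distribution P_{Y|X}(·|x) on Ω, for a finite string x. -/
noncomputable def postMeas (P : Measure (Seq × Seq)) (x : S) : Measure Seq :=
  (P (cyl x ×ˢ Set.univ))⁻¹ • ((P.restrict (cyl x ×ˢ Set.univ)).map Prod.snd)

/-!
If `p` prints `x` from the oracle `y` and `q` prints `y`, the machine that first runs `q` and
then runs `p` with oracle the output of `q` prints `(x, y)` from `(p, q)`, so optimality of `u`
bounds `Km²(x, y)` by `|p| + |q| + c`. The work is in showing that this composite is again
computable monotone: its graph is enumerated by pairing entries of the graph of `u`, and the
output is the right supremum because any finite prefix of the oracle `y` is already printed by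
a finite prefix of `q`.
-/

lemma prefixSeq_iff_eq_seqTake {x : S} {ω : Seq} : PrefixSeq x ω ↔ x = seqTake ω x.length := by
  constructor
  · intro h
    conv_lhs => rw [← List.ofFn_get x]
    exact congrArg List.ofFn (funext h)
  · intro h i
    simpa [seqTake] using congrArg (·[i.1]?) h

lemma seqTake_prefix_seqTake (ω : Seq) {m n : ℕ} (h : m ≤ n) : seqTake ω m <+: seqTake ω n := by
  rw [List.prefix_iff_eq_take]
  apply List.ext_getElem <;> simp [seqTake, h]

lemma PrefixSeq.prefix_of_length_le {x y : S} {ω : Seq} (hx : PrefixSeq x ω)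
    (hy : PrefixSeq y ω) (hlen : x.length ≤ y.length) : x <+: y := by
  rw [prefixSeq_iff_eq_seqTake.1 hx, prefixSeq_iff_eq_seqTake.1 hy]
  exact seqTake_prefix_seqTake ω hlen

lemma PrefixSeq.of_prefix {x y : S} {ω : Seq} (hxy : x <+: y) (hy : PrefixSeq y ω) :
    PrefixSeq x ω := by
  rw [prefixSeq_iff_eq_seqTake] at hy ⊢
  have hlen : x.length = (seqTake ω x.length).length := by simp [seqTake]
  refine (List.prefix_of_prefix_length_le hxy ?_ hlen.le).eq_of_length hlen
  exact hy ▸ seqTake_prefix_seqTake ω hxy.length_le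

namespace SW

lemma le_refl : ∀ a : SW, a.le a
  | .fin x => List.prefix_refl x
  | .inf _ => rfl

lemma le_trans : ∀ {a b c : SW}, a.le b → b.le c → a.le c
  | .fin _, .fin _, .fin _, hab, hbc => hab.trans hbc
  | .fin _, .fin _, .inf _, hab, hbc => hbc.of_prefix hab
  | .fin _, .inf _, .inf _, hab, hbc => hbc ▸ hab
  | .inf _, .inf _, .inf _, hab, hbc => hab.trans hbc

lemma fin_nil_le : ∀ a : SW, (fin []).le a
  | .fin _ => List.nil_prefix
  | .inf _ => fun i => i.elim0

lemma prefix_of_le_of_le {x y : S} {w : SW} (hx : (fin x).le w) (hy : (fin y).le w)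
    (hlen : x.length ≤ y.length) : x <+: y := by
  cases w with
  | fin z => exact List.prefix_of_prefix_length_le hx hy hlen
  | inf ω => exact PrefixSeq.prefix_of_length_le hx hy hlen

end SW

lemma SW2.le_trans {a b c : SW2} (hab : a.le b) (hbc : b.le c) : a.le c :=
  ⟨SW.le_trans hab.1 hbc.1, SW.le_trans hab.2 hbc.2⟩

lemma IsSupRel.le_of_subset {V : Type} {le : V → V → Prop} {A B : Set V} {s t : V}
    (hA : IsSupRel le A s) (hB : IsSupRel le B t) (hAB : A ⊆ B) : le s t :=
  hA.2 t fun a ha => hB.1 a (hAB ha)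

lemma IsSupRel.fst {B : Set (S × S)} {s : SW2} (h : IsSupRel SW2.le (emb2 '' B) s) :
    IsSupRel SW.le (SW.fin '' (Prod.fst '' B)) s.1 := by
  constructor
  · rintro _ ⟨_, ⟨p, hp, rfl⟩, rfl⟩
    exact (h.1 (emb2 p) ⟨p, hp, rfl⟩).1
  · intro b hb
    refine (h.2 (b, s.2) ?_).1
    rintro _ ⟨p, hp, rfl⟩
    exact ⟨hb _ ⟨p.1, ⟨p, hp, rfl⟩, rfl⟩, (h.1 _ ⟨p, hp, rfl⟩).2⟩

/-- A finite prefix of the supremum of a nonempty set of strings already lies below one of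
them: otherwise all of them would be proper prefixes of `x`, and so would be their supremum. -/
lemma IsSupRel.exists_prefix_mem {A : Set S} {w : SW} (hw : IsSupRel SW.le (SW.fin '' A) w)
    (hA : A.Nonempty) {x : S} (hx : (SW.fin x).le w) : ∃ y ∈ A, x <+: y := by
  by_contra! hnot
  obtain ⟨y₀, hy₀⟩ := hA
  have hx_ne : x ≠ [] := by rintro rfl; exact hnot y₀ hy₀ List.nil_prefix
  have hbound : w.le (SW.fin (x.take (x.length - 1))) := by
    refine hw.2 _ ?_
    rintro _ ⟨y, hy, rfl⟩
    have hyw := hw.1 _ ⟨y, hy, rfl⟩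
    have hlen : y.length < x.length := by
      by_contra! hle
      exact hnot y hy (SW.prefix_of_le_of_le hx hyw hle)
    exact List.prefix_take_iff.2 ⟨SW.prefix_of_le_of_le hyw hx hlen.le, by omega⟩
  have := (SW.le_trans hx hbound : x <+: _).length_le
  have hpos := List.length_pos_iff.2 hx_ne
  simp only [List.length_take] at this
  omega

namespace RESet

variable {α β γ : Type} [Primcodable α] [Primcodable β] [Primcodable γ]

lemma prod {A : Set α} {B : Set β} (hA : RESet A) (hB : RESet B) : RESet (A ×ˢ B) := by
  obtain ⟨e, he, rfl⟩ := hA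
  obtain ⟨e', he', rfl⟩ := hB
  refine ⟨fun n => (e n.unpair.1).bind fun a => (e' n.unpair.2).map (Prod.mk a), ?_, ?_⟩
  · exact (he.comp (Computable.fst.comp Computable.unpair)).option_bind
      ((he'.comp (Computable.snd.comp (Computable.unpair.comp Computable.fst))).option_map
        (Computable.pair (Computable.snd.comp Computable.fst) Computable.snd))
  · ext ⟨a, b⟩
    simp only [Set.mem_prod]
    constructor
    · rintro ⟨⟨m, hm⟩, ⟨n, hn⟩⟩
      exact ⟨Nat.pair m n, by simp [hm, hn]⟩
    · rintro ⟨n, hn⟩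
      simp only [Option.bind_eq_some_iff, Option.map_eq_some_iff, Prod.mk.injEq] at hn
      obtain ⟨a, ha, b, hb, rfl, rfl⟩ := hn
      exact ⟨⟨_, ha⟩, ⟨_, hb⟩⟩

lemma exists_eq_some {A : Set α} (hA : RESet A) {g : α → γ → Option β} (hg : Computable₂ g) :
    RESet {b | ∃ a ∈ A, ∃ c, g a c = some b} := by
  obtain ⟨e, he, rfl⟩ := hA
  refine ⟨fun n => (e n.unpair.1).bind fun a =>
    (Encodable.decode (α := γ) n.unpair.2).bind (g a), ?_, ?_⟩
  · have hc : Computable fun p : ℕ × α => Encodable.decode (α := γ) p.1.unpair.2 :=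
      Computable.decode.comp (Computable.snd.comp (Computable.unpair.comp Computable.fst))
    exact (he.comp (Computable.fst.comp Computable.unpair)).option_bind
      (hc.option_bind (hg.comp (Computable.snd.comp Computable.fst) Computable.snd))
  · ext b
    constructor
    · rintro ⟨a, ⟨m, hm⟩, c, hc⟩
      exact ⟨Nat.pair m (Encodable.encode c), by simp [hm, hc]⟩
    · rintro ⟨n, hn⟩
      simp only [Option.bind_eq_some_iff] at hn
      obtain ⟨a, ha, c, hc, hb⟩ := hn
      exact ⟨a, ⟨_, ha⟩, c, hb⟩

end RESet

def outputsBelow (F : Set ((S × S) × (S × S))) (q : SW2) : Set (S × S) :=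
  {x | ∃ p, (emb2 p).le q ∧ (p, x) ∈ F}

lemma mem_fst_outputsBelow_nil {F : Set ((S × S) × (S × S))} {q : SW} {y : S} :
    y ∈ Prod.fst '' outputsBelow F (q, SW.fin []) ↔
      ∃ b, (SW.fin b).le q ∧ ∃ t, ((b, []), (y, t)) ∈ F := by
  constructor
  · rintro ⟨⟨y, t⟩, ⟨⟨b, c⟩, ⟨hb, hc⟩, hF⟩, rfl⟩
    obtain rfl : c = [] := List.prefix_nil.1 hc
    exact ⟨b, hb, t, hF⟩
  · rintro ⟨b, hb, t, hF⟩
    exact ⟨(y, t), ⟨(b, []), ⟨hb, List.nil_prefix⟩, hF⟩, rfl⟩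

lemma CompMono22.le_of_le {u : SW2 → SW2} (hu : CompMono22 u) {q q' : SW2} (h : q.le q') :
    (u q).le (u q') := by
  obtain ⟨F, -, -, hsup⟩ := hu
  exact (hsup q).le_of_subset (hsup q') <|
    Set.image_mono fun _ ⟨p, hp, hF⟩ => ⟨p, SW2.le_trans hp h, hF⟩

def chainMachine (u : SW2 → SW2) (q : SW2) : SW2 :=
  ((u (q.1, (u (q.2, SW.fin [])).1)).1, (u (q.2, SW.fin [])).1)

def chainSet (F : Set ((S × S) × (S × S))) : Set ((S × S) × (S × S)) :=
  {z | (∃ t, ((z.1.2, []), (z.2.2, t)) ∈ F) ∧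
    ∃ y s, y <+: z.2.2 ∧ ((z.1.1, y), (z.2.1, s)) ∈ F}

/-- Combines the entries `((b, λ), (y, t))` and `((a, y'), (x, s))` of a graph into the entry
`((a, b), (x, y))` of its `chainSet`, provided `y' ++ r = y`. -/
def chainStep (w : ((S × S) × (S × S)) × ((S × S) × (S × S))) (r : S) :
    Option ((S × S) × (S × S)) :=
  if w.1.1.2 = [] ∧ w.2.1.2 ++ r = w.1.2.1 then
    some ((w.2.1.1, w.1.1.1), (w.2.2.1, w.1.2.1))
  else none

lemma primrec₂_chainStep : Primrec₂ chainStep := by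
  have w₁ := Primrec.fst.comp (Primrec.fst (α := ((S × S) × (S × S)) × ((S × S) × (S × S)))
    (β := S))
  have w₂ := Primrec.snd.comp (Primrec.fst (α := ((S × S) × (S × S)) × ((S × S) × (S × S)))
    (β := S))
  refine Primrec.ite (PrimrecPred.and ?_ ?_) (Primrec.option_some.comp ?_) (Primrec.const none)
  · exact Primrec.eq.comp (Primrec.snd.comp (Primrec.fst.comp w₁)) (Primrec.const [])
  · exact Primrec.eq.comp (Primrec.list_append.comp (Primrec.snd.comp (Primrec.fst.comp w₂))
      Primrec.snd) (Primrec.fst.comp (Primrec.snd.comp w₁))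
  · exact Primrec.pair
      (Primrec.pair (Primrec.fst.comp (Primrec.fst.comp w₂))
        (Primrec.fst.comp (Primrec.fst.comp w₁)))
      (Primrec.pair (Primrec.fst.comp (Primrec.snd.comp w₂))
        (Primrec.fst.comp (Primrec.snd.comp w₁)))

lemma chainSet_eq (F : Set ((S × S) × (S × S))) :
    chainSet F = {z | ∃ w ∈ F ×ˢ F, ∃ r, chainStep w r = some z} := by
  ext ⟨⟨a, b⟩, x, y⟩
  simp only [chainSet, chainStep, Set.mem_prod, Set.mem_ofPred_eq]
  constructor
  · rintro ⟨⟨t, hy⟩, y', s, ⟨r, rfl⟩, hx⟩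
    exact ⟨(((b, []), (y' ++ r, t)), ((a, y'), (x, s))), ⟨hy, hx⟩, r, by simp⟩
  · rintro ⟨⟨⟨⟨b', c⟩, y'', t⟩, ⟨a', y'⟩, x', s⟩, ⟨hy, hx⟩, r, h⟩
    split_ifs at h with hc
    simp only [Option.some.injEq, Prod.mk.injEq] at hc h
    obtain ⟨rfl, rfl⟩ := hc
    obtain ⟨⟨rfl, rfl⟩, rfl, rfl⟩ := h
    exact ⟨⟨t, hy⟩, y', s, ⟨r, rfl⟩, hx⟩

lemma RESet.chainSet {F : Set ((S × S) × (S × S))} (hF : RESet F) : RESet (chainSet F) :=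
  chainSet_eq F ▸ (hF.prod hF).exists_eq_some primrec₂_chainStep.to_comp

lemma isSupRel_chainSet {u : SW2 → SW2} {F : Set ((S × S) × (S × S))}
    (hsup : ∀ q, IsSupRel SW2.le (emb2 '' outputsBelow F q) (u q))
    (hnil : ∀ p : S × S, (p, (([], []) : S × S)) ∈ F) (q : SW2) :
    IsSupRel SW2.le (emb2 '' outputsBelow (chainSet F) q) (chainMachine u q) := by
  set w := (u (q.2, SW.fin [])).1
  have hw : IsSupRel SW.le (SW.fin '' (Prod.fst '' outputsBelow F (q.2, SW.fin []))) w :=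
    (hsup _).fst
  constructor
  · rintro _ ⟨⟨x, y⟩, ⟨⟨a, b⟩, ⟨ha, hb⟩, ⟨t, hy⟩, y', s, hy'y, hx⟩, rfl⟩
    have hyw : (SW.fin y).le w := hw.1 _ ⟨y, mem_fst_outputsBelow_nil.2 ⟨b, hb, t, hy⟩, rfl⟩
    have hy'w : (SW.fin y').le w := SW.le_trans (show (SW.fin y').le (.fin y) from hy'y) hyw
    exact ⟨((hsup (q.1, w)).1 (emb2 (x, s)) ⟨(x, s), ⟨(a, y'), ⟨ha, hy'w⟩, hx⟩, rfl⟩).1, hyw⟩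
  · intro v hv
    have hwv : w.le v.2 := by
      refine hw.2 _ ?_
      rintro _ ⟨y, hy, rfl⟩
      obtain ⟨b, hb, t, hF⟩ := mem_fst_outputsBelow_nil.1 hy
      exact (hv (emb2 ([], y)) ⟨_, ⟨([], b), ⟨SW.fin_nil_le _, hb⟩, ⟨t, hF⟩, [], [],
        List.nil_prefix, hnil _⟩, rfl⟩).2
    refine ⟨(hsup (q.1, w)).fst.2 _ ?_, hwv⟩
    rintro _ ⟨_, ⟨⟨x, s⟩, ⟨⟨a, y'⟩, ⟨ha, hy'⟩, hx⟩, rfl⟩, rfl⟩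
    have hne : (Prod.fst '' outputsBelow F (q.2, SW.fin [])).Nonempty :=
      ⟨[], mem_fst_outputsBelow_nil.2 ⟨[], SW.fin_nil_le _, [], hnil _⟩⟩
    obtain ⟨y, hy, hy'y⟩ := hw.exists_prefix_mem hne hy'
    obtain ⟨b, hb, t, hF⟩ := mem_fst_outputsBelow_nil.1 hy
    exact (hv (emb2 (x, y)) ⟨_, ⟨(a, b), ⟨ha, hb⟩, ⟨t, hF⟩, y', s, hy'y, hx⟩, rfl⟩).1

lemma CompMono22.chainMachine {u : SW2 → SW2} (hu : CompMono22 u) :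
    CompMono22 (chainMachine u) := by
  obtain ⟨F, hF, hF_nil, hsup⟩ := hu
  have hnil : ∀ p : S × S, (p, (([], []) : S × S)) ∈ F := fun p => (hF_nil p).1
  refine ⟨chainSet F, hF.chainSet,
    fun p => ⟨?_, _, isSupRel_chainSet hsup hnil (emb2 p)⟩, isSupRel_chainSet hsup hnil⟩
  exact ⟨⟨[], hnil _⟩, [], [], List.nil_prefix, hnil _⟩

lemma km2_chainMachine_le {u : SW2 → SW2} (hu : CompMono22 u) (x y : SW) :
    Km2 (chainMachine u) (x, y) ≤ KmCond u x y + KmCond u y (SW.fin []) :=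
  ENat.le_iInf₂_add_iInf₂ fun p hp q hq => iInf₂_le_of_le (p, q)
    ⟨SW.le_trans hp.1 (hu.le_of_le ⟨SW.le_refl p, hq.1⟩).1, hq.1⟩ le_rfl

/-- Proposition 1 c: conditional sub-additivity: there is a constant c
such that Km²(x,y) ≤ Km(x|y) + Km(y) + c for all x, y ∈ S∪Ω. -/
theorem conditional_subadditivity (u : SW2 → SW2) (hu : Optimal u) :
    ∃ c : ℕ, ∀ x y : SW,
      Km2 u (x, y) ≤ KmCond u x y + KmCond u y (SW.fin []) + (c : ℕ∞) := by
  obtain ⟨c, hc⟩ := hu.2 _ hu.1.chainMachine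
  exact ⟨c, fun x y => (hc (x, y)).trans (by gcongr; exact km2_chainMachine_le hu.1 x y)⟩

end AlgRand
end

section
/- If A ⊆ S² is recursively enumerable and satisfies condition (5), then for every recursively enumerable A' ⊆ A there is a non-overlapping recursively enumerable A'' ⊆ A such that ∪_{x∈A''} Δ(x) = ∪_{x∈A'} Δ(x). -/
open MeasureTheory Filter Set
open scoped ENNReal NNReal

namespace AlgRand

/-!
Enumerate `A'` as `a₀, a₁, …`. The `j`-th difference `Δ(a_j) \ ⋃_{i<j} Δ(a_i)` is clopen, hence
compact, and iterating condition (5) tiles it by a non-overlapping family of members of `A`; the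
family is finite, because a non-overlapping cover of a compact set by nonempty open cylinders is.
Whether a finite list tiles such a difference is decidable (test all pairs of strings of one length
bounding those occurring), so a search through the finite lists enumerated from `A` finds a tiling,
always the same one for a given `j`. These tilings form `A''`: tilings for different `j` are
disjoint because the differences are, and together they cover `⋃_j Δ(a_j)`.
-/

def extSeq (x : S) : Seq := fun i => x.getD i false

@[simp] lemma length_seqTake (ω : Seq) (n : ℕ) : (seqTake ω n).length = n := by
  simp [seqTake]

lemma take_seqTake {ω : Seq} {m n : ℕ} (h : m ≤ n) : (seqTake ω n).take m = seqTake ω m :=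
  List.ext_getElem (by simp [h]) fun i _ _ => by simp [seqTake]

lemma prefixSeq_iff_seqTake {x : S} {ω : Seq} : PrefixSeq x ω ↔ seqTake ω x.length = x := by
  constructor
  · intro h
    exact List.ext_getElem (by simp) fun i _ hi => by simpa [seqTake] using (h ⟨i, hi⟩).symm
  · rintro h ⟨i, hi⟩
    rw [List.get_eq_getElem, ← List.getElem_of_eq h (by simpa using hi)]
    simp [seqTake]

lemma seqTake_extSeq (x : S) : seqTake (extSeq x) x.length = x :=
  List.ext_getElem (by simp) fun i _ _ => by simp [seqTake, extSeq]

lemma prefixSeq_iff_prefix_seqTake {x : S} {ω : Seq} {N : ℕ} (h : x.length ≤ N) :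
    PrefixSeq x ω ↔ x <+: seqTake ω N := by
  rw [prefixSeq_iff_seqTake, List.prefix_iff_eq_take, take_seqTake h, eq_comm]

lemma mem_cyl2_iff_pre2 {z : S × S} {ω : Seq × Seq} {N : ℕ} (h1 : z.1.length ≤ N)
    (h2 : z.2.length ≤ N) : ω ∈ cyl2 z ↔ Pre2 z (seqTake ω.1 N, seqTake ω.2 N) :=
  and_congr (prefixSeq_iff_prefix_seqTake h1) (prefixSeq_iff_prefix_seqTake h2)

lemma cyl2_nonempty (z : S × S) : (cyl2 z).Nonempty :=
  ⟨(extSeq z.1, extSeq z.2), prefixSeq_iff_seqTake.2 (seqTake_extSeq _),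
    prefixSeq_iff_seqTake.2 (seqTake_extSeq _)⟩

lemma isClopen_cyl (x : S) : IsClopen (cyl x) := by
  have : cyl x = ⋂ i : Fin x.length, (fun ω : Seq => ω i) ⁻¹' {x.get i} := by
    ext ω
    simp [cyl, PrefixSeq, eq_comm]
  rw [this]
  exact isClopen_iInter_of_finite fun i => (isClopen_discrete _).preimage (continuous_apply _)

lemma isClopen_cyl2 (z : S × S) : IsClopen (cyl2 z) :=
  (isClopen_cyl z.1).prod (isClopen_cyl z.2)

def allStrings : ℕ → List S
  | 0 => [[]]
  | N + 1 => (allStrings N).map (false :: ·) ++ (allStrings N).map (true :: ·)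

lemma mem_allStrings {N : ℕ} {u : S} : u ∈ allStrings N ↔ u.length = N := by
  induction N generalizing u with
  | zero => simp [allStrings]
  | succ N ih =>
    rcases u with _ | ⟨b, v⟩
    · simp [allStrings]
    · cases b <;> simp [allStrings, ih]

lemma forall_seqTake_iff {N : ℕ} {P : S × S → Prop} :
    (∀ ω : Seq × Seq, P (seqTake ω.1 N, seqTake ω.2 N)) ↔
      ∀ u ∈ allStrings N, ∀ v ∈ allStrings N, P (u, v) := by
  simp only [mem_allStrings]
  refine ⟨fun h u hu v hv => ?_, fun h ω => h _ (length_seqTake _ _) _ (length_seqTake _ _)⟩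
  have hu' : seqTake (extSeq u) N = u := hu ▸ seqTake_extSeq u
  have hv' : seqTake (extSeq v) N = v := hv ▸ seqTake_extSeq v
  simpa [hu', hv'] using h (extSeq u, extSeq v)

lemma finite_of_pairwiseDisjoint_of_isCompact {X ι : Type*} [TopologicalSpace X] {s : Set ι}
    {U : ι → Set X} (hK : IsCompact (⋃ i ∈ s, U i)) (hU : ∀ i ∈ s, IsOpen (U i))
    (hne : ∀ i ∈ s, (U i).Nonempty) (hdisj : s.PairwiseDisjoint U) : s.Finite := by
  obtain ⟨t, hts, htf, hcov⟩ := hK.elim_finite_subcover_image hU subset_rfl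
  refine htf.subset fun i hi => ?_
  obtain ⟨x, hx⟩ := hne i hi
  obtain ⟨j, hj, hxj⟩ := Set.mem_iUnion₂.1 (hcov (Set.mem_biUnion hi hx))
  by_contra hit
  exact Set.disjoint_left.1 (hdisj hi (hts hj) (ne_of_mem_of_not_mem hj hit).symm) hx hxj

def Tiles (β : List (S × S)) (T : Set (Seq × Seq)) : Prop :=
  NonOverlapF {z | z ∈ β} ∧ ⋃ z ∈ β, cyl2 z = T

lemma Tiles.cyl2_subset {β : List (S × S)} {T : Set (Seq × Seq)} (h : Tiles β T) {z : S × S}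
    (hz : z ∈ β) : cyl2 z ⊆ T :=
  h.2 ▸ Set.subset_biUnion_of_mem (u := cyl2) hz

lemma Tiles.flatMap {β : List (S × S)} {T U : Set (Seq × Seq)} {γ : S × S → List (S × S)}
    (hβ : Tiles β T) (hγ : ∀ z ∈ β, Tiles (γ z) (cyl2 z ∩ U)) :
    Tiles (β.flatMap γ) (T ∩ U) := by
  constructor
  · rintro p hp q hq hpq
    obtain ⟨z, hz, hpz⟩ := List.mem_flatMap.1 hp
    obtain ⟨w, hw, hqw⟩ := List.mem_flatMap.1 hq
    by_cases hzw : z = w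
    · subst hzw
      exact (hγ z hz).1 hpz hqw hpq
    · refine Set.subset_empty_iff.1 (hβ.1 hz hw hzw ▸ Set.inter_subset_inter ?_ ?_)
      · exact ((hγ z hz).cyl2_subset hpz).trans Set.inter_subset_left
      · exact ((hγ w hw).cyl2_subset hqw).trans Set.inter_subset_left
  · rw [← hβ.2, Set.iUnion₂_inter]
    ext ω
    simp only [Set.mem_iUnion, List.mem_flatMap, exists_prop]
    constructor
    · rintro ⟨p, ⟨z, hz, hp⟩, hω⟩
      exact ⟨z, hz, (hγ z hz).cyl2_subset hp hω⟩
    · rintro ⟨z, hz, hω⟩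
      rw [← (hγ z hz).2] at hω
      obtain ⟨p, hp, hωp⟩ := Set.mem_iUnion₂.1 hω
      exact ⟨p, ⟨z, hz, hp⟩, hωp⟩

lemma exists_tiles_cyl2_inter_compl {A : Set (S × S)} (h5 : Cond5 A) {a b : S × S} (ha : a ∈ A)
    (hb : b ∈ A) : ∃ γ : List (S × S), (∀ z ∈ γ, z ∈ A) ∧ Tiles γ (cyl2 a ∩ (cyl2 b)ᶜ) := by
  obtain ⟨α, hαA, hα, hαU⟩ := h5 a ha b hb
  have hK : IsCompact (⋃ z ∈ α, cyl2 z) :=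
    hαU ▸ ((isClopen_cyl2 a).isClosed.inter (isClopen_cyl2 b).compl.isClosed).isCompact
  have hfin : α.Finite := finite_of_pairwiseDisjoint_of_isCompact hK
    (fun z _ => (isClopen_cyl2 z).isOpen) (fun z _ => cyl2_nonempty z)
    (fun z hz w hw hzw => Set.disjoint_iff_inter_eq_empty.2 (hα hz hw hzw))
  refine ⟨hfin.toFinset.toList, fun z hz => hαA (by simpa using hz), ?_, ?_⟩
  · simpa using hα
  · simpa using hαU.symm

lemma exists_tiles_sdiff {A : Set (S × S)} (h5 : Cond5 A) {a : S × S} (ha : a ∈ A) :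
    ∀ B : List (S × S), (∀ b ∈ B, b ∈ A) →
      ∃ β : List (S × S), (∀ z ∈ β, z ∈ A) ∧ Tiles β (cyl2 a \ ⋃ b ∈ B, cyl2 b)
  | [], _ => ⟨[a], by simpa using ha, by simp [Tiles, NonOverlapF]⟩
  | b :: B, hB => by
    obtain ⟨β, hβA, hβ⟩ := exists_tiles_sdiff h5 ha B fun b' hb' => hB b' (by simp [hb'])
    choose! γ hγA hγ using fun z (hz : z ∈ β) =>
      exists_tiles_cyl2_inter_compl h5 (hβA z hz) (hB b (by simp))
    refine ⟨β.flatMap γ, fun p hp => ?_, ?_⟩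
    · obtain ⟨z, hz, hpz⟩ := List.mem_flatMap.1 hp
      exact hγA z hz p hpz
    · convert hβ.flatMap hγ using 1
      ext ω
      simp only [List.mem_cons, Set.iUnion_iUnion_eq_or_left, Set.mem_sdiff, Set.mem_union,
        Set.mem_inter_iff, Set.mem_compl_iff]
      tauto

/-- The pointwise form of `Tiles β (cyl2 a \ ⋃ b ∈ B, cyl2 b)` at one point, where `mem z` says
that the point lies in `cyl2 z`; on the grid of strings of a fixed length it is `Pre2 · (u, v)`. -/
def TilesAt (mem : S × S → Prop) (β B : List (S × S)) (a : S × S) : Prop :=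
  (∀ z ∈ β, ∀ w ∈ β, mem z → mem w → z = w) ∧ ((∃ z ∈ β, mem z) ↔ mem a ∧ ∀ b ∈ B, ¬mem b)

lemma tilesAt_congr {mem mem' : S × S → Prop} {β B : List (S × S)} {a : S × S}
    (h : ∀ z ∈ a :: B ++ β, mem z ↔ mem' z) : TilesAt mem β B a ↔ TilesAt mem' β B a := by
  have hβ : ∀ z ∈ β, mem z ↔ mem' z := fun z hz => h z (by simp [hz])
  have hB : ∀ z ∈ B, mem z ↔ mem' z := fun z hz => h z (by simp [hz])
  refine and_congr (forall₂_congr fun z hz => forall₂_congr fun w hw => ?_) (iff_congr ?_ ?_)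
  · rw [hβ z hz, hβ w hw]
  · exact exists_congr fun z => and_congr_right fun hz => hβ z hz
  · exact and_congr (h a (by simp)) (forall₂_congr fun b hb => not_congr (hB b hb))

lemma tiles_sdiff_iff_forall {β B : List (S × S)} {a : S × S} :
    Tiles β (cyl2 a \ ⋃ b ∈ B, cyl2 b) ↔ ∀ ω, TilesAt (fun z => ω ∈ cyl2 z) β B a := by
  simp only [TilesAt, forall_and, Tiles, Set.ext_iff]
  refine and_congr ⟨fun h ω z hz w hw hωz hωw => ?_, fun h z hz w hw hzw => ?_⟩ ?_
  · by_contra hne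
    exact (h hz hw hne ▸ ⟨hωz, hωw⟩ : ω ∈ (∅ : Set (Seq × Seq)))
  · exact Set.eq_empty_iff_forall_notMem.2 fun ω hω => hzw (h ω z hz w hw hω.1 hω.2)
  · simp

lemma tiles_sdiff_iff_grid {β B : List (S × S)} {a : S × S} {N : ℕ}
    (hN : ∀ z ∈ a :: B ++ β, z.1.length ≤ N ∧ z.2.length ≤ N) :
    Tiles β (cyl2 a \ ⋃ b ∈ B, cyl2 b) ↔
      ∀ u ∈ allStrings N, ∀ v ∈ allStrings N, TilesAt (fun z => Pre2 z (u, v)) β B a := by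
  rw [tiles_sdiff_iff_forall,
    ← forall_seqTake_iff (P := fun p => TilesAt (fun z => Pre2 z p) β B a)]
  exact forall_congr' fun ω => tilesAt_congr fun z hz =>
    mem_cyl2_iff_pre2 (hN z hz).1 (hN z hz).2

lemma length_le_length_flatMap {L : List (S × S)} {z : S × S} (hz : z ∈ L) :
    z.1.length ≤ (L.flatMap fun z => z.1 ++ z.2).length ∧
      z.2.length ≤ (L.flatMap fun z => z.1 ++ z.2).length := by
  have := List.le_sum_of_mem (List.mem_map_of_mem (f := fun z : S × S => (z.1 ++ z.2).length) hz)
  simp only [List.length_flatMap, List.length_append] at this ⊢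
  omega

section PrimrecCombinators

variable {α β : Type*} [Primcodable α] [Primcodable β]

protected lemma _root_.PrimrecPred.imp {p q : α → Prop} (hp : PrimrecPred p)
    (hq : PrimrecPred q) : PrimrecPred fun a => p a → q a :=
  (hp.not.or hq).of_eq fun _ => imp_iff_not_or.symm

protected lemma _root_.PrimrecPred.iff {p q : α → Prop} (hp : PrimrecPred p)
    (hq : PrimrecPred q) : PrimrecPred fun a => (p a ↔ q a) :=
  ((hp.and hq).or (hp.not.and hq.not)).of_eq fun _ => by tauto

lemma _root_.PrimrecPred.forall_mem {f : α → List β} {p : α → β → Prop} (hf : Primrec f)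
    (hp : PrimrecRel p) : PrimrecPred fun a => ∀ b ∈ f a, p a b :=
  hp.swap.forall_mem_list.comp hf .id

lemma _root_.PrimrecPred.exists_mem {f : α → List β} {p : α → β → Prop} (hf : Primrec f)
    (hp : PrimrecRel p) : PrimrecPred fun a => ∃ b ∈ f a, p a b :=
  hp.swap.exists_mem_list.comp hf .id

lemma _root_.PrimrecRel.isPrefix : PrimrecRel (@List.IsPrefix α) :=
  (Primrec.eq.comp .fst (Primrec.list_take.comp (Primrec.list_length.comp .fst) .snd)).of_eq
    fun _ => List.prefix_iff_eq_take.symm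

lemma _root_.PrimrecRel.list_mem : PrimrecRel fun (a : α) (L : List α) => a ∈ L :=
  (PrimrecPred.exists_mem (p := fun x b => b = x.1) .snd
    (Primrec.eq.comp .snd (Primrec.fst.comp .fst))).of_eq fun _ => by simp

end PrimrecCombinators

open Primrec in
lemma primrecRel_pre2 : PrimrecRel Pre2 :=
  (PrimrecRel.isPrefix.comp (fst.comp fst) (fst.comp snd)).and
    (PrimrecRel.isPrefix.comp (snd.comp fst) (snd.comp snd))

lemma primrec_allStrings : Primrec allStrings := by
  have step : Primrec₂ fun (_ : ℕ) (L : List S) => L.map (false :: ·) ++ L.map (true :: ·) :=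
    Primrec.list_append.comp
      (Primrec.list_map .snd (Primrec.list_cons.comp (.const false) .snd).to₂)
      (Primrec.list_map .snd (Primrec.list_cons.comp (.const true) .snd).to₂)
  refine (Primrec.nat_rec₁ [[]] step).of_eq fun n => ?_
  induction n with
  | zero => rfl
  | succ n ih => simp only [allStrings, ← ih]

open Primrec in
lemma primrecPred_tilesAt :
    PrimrecPred fun x : (List (S × S) × List (S × S) × (S × S)) × (S × S) =>
      TilesAt (fun z => Pre2 z x.2) x.1.1 x.1.2.1 x.1.2.2 := by
  have hmem : ∀ {γ : Type} [Primcodable γ] {f : γ → S × S} {g : γ → S × S},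
      Primrec f → Primrec g → PrimrecPred fun c => Pre2 (f c) (g c) :=
    fun hf hg => primrecRel_pre2.comp hf hg
  refine PrimrecPred.and ?_ (PrimrecPred.iff ?_ ?_)
  · refine PrimrecPred.forall_mem (fst.comp fst)
      (PrimrecPred.forall_mem (fst.comp (fst.comp fst)) ?_)
    exact (hmem (snd.comp fst) (snd.comp (fst.comp fst))).imp
      ((hmem snd (snd.comp (fst.comp fst))).imp (Primrec.eq.comp (snd.comp fst) snd))
  · exact PrimrecPred.exists_mem (fst.comp fst) (hmem snd (snd.comp fst))
  · refine (hmem (snd.comp (snd.comp fst)) snd).and ?_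
    exact PrimrecPred.forall_mem (fst.comp (snd.comp fst)) (hmem snd (snd.comp fst)).not

open Primrec in
lemma primrecPred_tiles_sdiff :
    PrimrecPred fun x : List (S × S) × List (S × S) × (S × S) =>
      Tiles x.1 (cyl2 x.2.2 \ ⋃ b ∈ x.2.1, cyl2 b) := by
  let N : List (S × S) × List (S × S) × (S × S) → ℕ := fun x =>
    ((x.2.2 :: x.2.1 ++ x.1).flatMap fun z => z.1 ++ z.2).length
  have hN : Primrec N := list_length.comp <| list_flatMap
    (list_append.comp (list_cons.comp (snd.comp snd) (fst.comp snd)) fst)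
    (list_append.comp (fst.comp snd) (snd.comp snd)).to₂
  have hcell : PrimrecRel fun (y : (List (S × S) × List (S × S) × (S × S)) × S) (v : S) =>
      TilesAt (fun z => Pre2 z (y.2, v)) y.1.1 y.1.2.1 y.1.2.2 :=
    primrecPred_tilesAt.comp (pair (fst.comp fst) (pair (snd.comp fst) snd))
  have hrow : PrimrecRel fun (x : List (S × S) × List (S × S) × (S × S)) (u : S) =>
      ∀ v ∈ allStrings (N x), TilesAt (fun z => Pre2 z (u, v)) x.1 x.2.1 x.2.2 :=
    PrimrecPred.forall_mem (primrec_allStrings.comp (hN.comp fst)) hcell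
  have := PrimrecPred.forall_mem (primrec_allStrings.comp hN) hrow
  exact this.of_eq fun x => (tiles_sdiff_iff_grid fun z hz => length_le_length_flatMap hz).symm

section Computability

variable {α σ : Type*} [Primcodable α] [Primcodable σ]

lemma computable_filterMap_range {f : ℕ → Option σ} (hf : Computable f) :
    Computable fun n => (List.range n).filterMap f := by
  have step : Computable₂ fun (_ : ℕ) (p : ℕ × List σ) => p.2 ++ (f p.1).toList :=
    (Computable.list_append.comp (Computable.snd.comp .snd)
      (Primrec.optionToList.to_comp.comp (hf.comp (Computable.fst.comp .snd)))).to₂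
  refine (Computable.nat_rec .id (.const []) step).of_eq fun n => ?_
  induction n with
  | zero => rfl
  | succ n ih =>
    rw [List.range_succ, List.filterMap_append, ← ih]
    cases f n <;> rfl

lemma computable₂_findSome?_range {f : α → ℕ → Option σ} (hf : Computable₂ f) :
    Computable₂ fun a n => (List.range n).findSome? (f a) := by
  have step : Computable₂ fun (a : α) (p : ℕ × Option σ) => p.2 <|> f a p.1 :=
    (Primrec.option_orElse.to_comp.comp (Computable.snd.comp .snd)
      (hf.comp .fst (Computable.fst.comp .snd))).to₂
  refine (Computable.nat_rec .snd (.const none)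
    (step.comp (Computable.fst.comp .fst) .snd).to₂).of_eq fun ⟨a, n⟩ => ?_
  induction n with
  | zero => rfl
  | succ n ih =>
    dsimp only at ih ⊢
    rw [List.range_succ, List.findSome?_append, List.findSome?_singleton, ← ih]
    exact Option.orElse_eq_or

end Computability

lemma reSet_of_computable₂ {σ : Type} [Primcodable σ] {g : ℕ → ℕ → Option (List σ)}
    (hg : Computable₂ g) : RESet {z : σ | ∃ j n, ∃ L ∈ g j n, z ∈ L} := by
  refine ⟨fun m => (g m.unpair.1 m.unpair.2.unpair.1).bind (·[m.unpair.2.unpair.2]?), ?_, ?_⟩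
  · exact Computable.option_bind (hg.comp (Computable.fst.comp .unpair)
      (Computable.fst.comp (Computable.unpair.comp (Computable.snd.comp .unpair))))
      (Computable.list_getElem?.comp .snd
        (Computable.snd.comp (Computable.unpair.comp (Computable.snd.comp
          (Computable.unpair.comp .fst)))))
  · ext z
    simp only [Set.mem_ofPred_eq, Option.mem_def, Option.bind_eq_some_iff]
    constructor
    · rintro ⟨j, n, L, hL, hz⟩
      obtain ⟨i, hi⟩ := List.mem_iff_getElem?.1 hz
      exact ⟨Nat.pair j (Nat.pair n i), L, by simpa using hL, by simpa using hi⟩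
    · rintro ⟨m, L, hL, hi⟩
      exact ⟨_, _, L, hL, List.mem_of_getElem? hi⟩

section Search

variable (fA fA' : ℕ → Option (S × S))

open Classical in
/-- Candidate number `c` for the tiling of the `j`-th difference: `c` codes a list `β` together with
a stage `s` by which the enumeration of `A` has listed all of `β`. The test is decided classically;
`computable₂_candidate` shows that it is nevertheless computable. -/
noncomputable def candidate (j c : ℕ) : Option (List (S × S)) :=
  (fA' j).bind fun a => (Encodable.decode c : Option (List (S × S) × ℕ)).bind fun p =>
    if (∀ z ∈ p.1, z ∈ (List.range p.2).filterMap fA) ∧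
        Tiles p.1 (cyl2 a \ ⋃ b ∈ (List.range j).filterMap fA', cyl2 b) then some p.1
    else none

noncomputable def firstFound (j n : ℕ) : Option (List (S × S)) :=
  (List.range n).findSome? (candidate fA fA' j)

def refinedSet : Set (S × S) := {z | ∃ j n, ∃ β ∈ firstFound fA fA' j n, z ∈ β}

variable {fA fA'}

open Classical Primrec in
lemma computable₂_candidate (hfA : Computable fA) (hfA' : Computable fA') :
    Computable₂ (candidate fA fA') := by
  have hcheck : PrimrecPred fun x : (List (S × S) × List (S × S)) × List (S × S) × (S × S) =>
      (∀ z ∈ x.1.1, z ∈ x.1.2) ∧ Tiles x.1.1 (cyl2 x.2.2 \ ⋃ b ∈ x.2.1, cyl2 b) :=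
    (PrimrecPred.forall_mem (p := fun x z => z ∈ x.1.2) (fst.comp fst)
      (PrimrecRel.list_mem.comp snd (snd.comp (fst.comp fst)))).and
      (primrecPred_tiles_sdiff.comp (pair (fst.comp fst) snd))
  have hsel := Primrec.ite hcheck (option_some.comp (fst.comp fst)) (const none)
  have hE := computable_filterMap_range hfA
  have hB := computable_filterMap_range hfA'
  refine (Computable.option_bind (hfA'.comp .fst) (Computable.option_bind
    (Computable.decode.comp (Computable.snd.comp .fst))
    (hsel.to_comp.comp (.pair (.pair (Computable.fst.comp .snd)
      (hE.comp (Computable.snd.comp .snd))) (.pair (hB.comp (Computable.fst.comp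
        (Computable.fst.comp .fst))) (Computable.snd.comp .fst)))).to₂).to₂).of_eq fun _ => rfl

lemma cyl2_sdiff_eq_disjointed {j : ℕ} {a : S × S} (ha : fA' j = some a) :
    cyl2 a \ ⋃ b ∈ (List.range j).filterMap fA', cyl2 b =
      disjointed (fun i => ⋃ a ∈ fA' i, cyl2 a) j := by
  rw [disjointed_eq_inter_compl]
  ext ω
  simp [ha]

lemma candidate_spec {j c : ℕ} {β : List (S × S)} (h : candidate fA fA' j c = some β) :
    (∀ z ∈ β, ∃ n, fA n = some z) ∧ Tiles β (disjointed (fun i => ⋃ a ∈ fA' i, cyl2 a) j) := by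
  simp only [candidate, Option.bind_eq_some_iff] at h
  obtain ⟨a, ha, p, -, hp⟩ := h
  split_ifs at hp with hcheck
  cases hp
  refine ⟨fun z hz => ?_, cyl2_sdiff_eq_disjointed ha ▸ hcheck.2⟩
  obtain ⟨n, -, hn⟩ := by simpa using hcheck.1 z hz
  exact ⟨n, hn⟩

lemma exists_candidate {j : ℕ} {a : S × S} {β : List (S × S)} (ha : fA' j = some a)
    (hβA : ∀ z ∈ β, ∃ n, fA n = some z)
    (hβ : Tiles β (cyl2 a \ ⋃ b ∈ (List.range j).filterMap fA', cyl2 b)) :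
    ∃ c, candidate fA fA' j c = some β := by
  obtain ⟨s, hs⟩ : ∃ s, ∀ z ∈ β, z ∈ (List.range s).filterMap fA := by
    refine (β.finite_toSet.eventually_all.2 fun z hz => ?_).exists (f := atTop)
    obtain ⟨n, hn⟩ := hβA z hz
    filter_upwards [eventually_gt_atTop n] with s hs
    simpa using ⟨n, hs, hn⟩
  refine ⟨Encodable.encode (β, s), ?_⟩
  simp only [candidate, ha, Option.bind_some, Encodable.encodek]
  exact if_pos ⟨hs, hβ⟩

lemma firstFound_spec {j n : ℕ} {β : List (S × S)} (h : firstFound fA fA' j n = some β) :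
    (∀ z ∈ β, ∃ n, fA n = some z) ∧ Tiles β (disjointed (fun i => ⋃ a ∈ fA' i, cyl2 a) j) :=
  have ⟨_, _, hc⟩ := List.exists_of_findSome?_eq_some h
  candidate_spec hc

lemma firstFound_mono {j m n : ℕ} {β : List (S × S)} (h : firstFound fA fA' j m = some β)
    (hmn : m ≤ n) : firstFound fA fA' j n = some β := by
  obtain ⟨k, rfl⟩ := Nat.exists_eq_add_of_le hmn
  rw [firstFound] at h ⊢
  rw [List.range_add, List.findSome?_append, h, Option.some_or]

lemma firstFound_unique {j m n : ℕ} {β β' : List (S × S)} (h : firstFound fA fA' j m = some β)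
    (h' : firstFound fA fA' j n = some β') : β = β' := by
  rcases le_total m n with hmn | hnm
  · exact Option.some_inj.1 ((firstFound_mono h hmn).symm.trans h')
  · exact Option.some_inj.1 (h.symm.trans (firstFound_mono h' hnm))

lemma exists_firstFound (h5 : Cond5 {z | ∃ n, fA n = some z})
    (hsub : ∀ i a, fA' i = some a → ∃ n, fA n = some a) {j : ℕ} {a : S × S}
    (ha : fA' j = some a) : ∃ n β, firstFound fA fA' j n = some β := by
  obtain ⟨β, hβA, hβ⟩ := exists_tiles_sdiff h5 (hsub j a ha) ((List.range j).filterMap fA')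
    fun b hb => by
      obtain ⟨i, -, hi⟩ := by simpa using hb
      exact hsub i b hi
  obtain ⟨c, hc⟩ := exists_candidate ha hβA hβ
  cases h : firstFound fA fA' j (c + 1) with
  | some β' => exact ⟨_, _, h⟩
  | none => simpa [hc] using List.findSome?_eq_none_iff.1 h c (by simp)

lemma nonOverlapF_refinedSet : NonOverlapF (refinedSet fA fA') := by
  rintro z ⟨j, n, β, hβ, hz⟩ w ⟨k, m, β', hβ', hw⟩ hzw
  have hT := (firstFound_spec hβ).2
  have hT' := (firstFound_spec hβ').2
  rcases eq_or_ne j k with rfl | hjk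
  · obtain rfl := firstFound_unique hβ hβ'
    exact hT.1 hz hw hzw
  · exact Set.disjoint_iff_inter_eq_empty.1
      ((disjoint_disjointed _ hjk).mono (hT.cyl2_subset hz) (hT'.cyl2_subset hw))

lemma biUnion_refinedSet (h5 : Cond5 {z | ∃ n, fA n = some z})
    (hsub : ∀ i a, fA' i = some a → ∃ n, fA n = some a) :
    ⋃ z ∈ refinedSet fA fA', cyl2 z = ⋃ j, ⋃ a ∈ fA' j, cyl2 a := by
  rw [← iUnion_disjointed (f := fun j => ⋃ a ∈ fA' j, cyl2 a)]
  refine Set.Subset.antisymm (Set.iUnion₂_subset ?_) fun ω hω => ?_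
  · rintro z ⟨j, n, β, hβ, hz⟩
    exact ((firstFound_spec hβ).2.cyl2_subset hz).trans (Set.subset_iUnion _ j)
  · obtain ⟨j, hj⟩ := Set.mem_iUnion.1 hω
    obtain ⟨a, ha, -⟩ := Set.mem_iUnion₂.1 (disjointed_subset _ j hj)
    obtain ⟨n, β, hβ⟩ := exists_firstFound h5 hsub ha
    rw [← (firstFound_spec hβ).2.2] at hj
    obtain ⟨z, hz, hωz⟩ := Set.mem_iUnion₂.1 hj
    exact Set.mem_iUnion₂.2 ⟨z, ⟨j, n, β, hβ, hz⟩, hωz⟩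

end Search

/-- Lemma 1: if A ⊆ S² is r.e. and satisfies condition (5), then for every
r.e. A' ⊆ A there is a non-overlapping r.e. A'' ⊆ A with the same cylinder union. -/
theorem nonoverlap_refinement (A : Set (S × S)) (hA : RESet A) (h5 : Cond5 A)
    (A' : Set (S × S)) (hsub : A' ⊆ A) (hA' : RESet A') :
    ∃ A'' : Set (S × S), A'' ⊆ A ∧ RESet A'' ∧ NonOverlapF A'' ∧
      (⋃ x ∈ A'', cyl2 x) = ⋃ x ∈ A', cyl2 x := by
  obtain ⟨fA, hfA, rfl⟩ := hA
  obtain ⟨fA', hfA', rfl⟩ := hA'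
  refine ⟨refinedSet fA fA', fun z ⟨j, n, β, hβ, hz⟩ => (firstFound_spec hβ).1 z hz,
    reSet_of_computable₂ (computable₂_findSome?_range (computable₂_candidate hfA hfA')),
    nonOverlapF_refinedSet, ?_⟩
  rw [biUnion_refinedSet h5 fun j a ha => hsub ⟨j, ha⟩]
  ext ω
  simp only [Set.mem_iUnion, Set.mem_ofPred_eq, Option.mem_def, exists_prop]
  exact ⟨fun ⟨j, a, ha, h⟩ => ⟨a, ⟨j, ha⟩, h⟩, fun ⟨a, ⟨j, ha⟩, h⟩ => ⟨j, a, ha, h⟩⟩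

end AlgRand
end
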